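/- arXiv:2503.15786 — 3 statements merged into one kernel-verified Lean document; each statement's English description precedes it below -/
import Mathlib

section
/- Error estimate for the quadratic B-spline quasi-interpolation (Theorem 1, univariate uniform case): there exists a constant C > 0, independent of h and of u, such that for every h > 0 and every function u : ℝ → ℝ of class C³ with bounded derivatives up to order 3, sup_{x ∈ ℝ} |u(x) − (I_b u)(x)| ≤ C · h³ · ‖u‖_{W^{3,∞}(ℝ)}. -/
open scoped BigOperators Classical

/-- Quadratic (and general degree) B-spline basis functions on the uniform knot
sequence `s_j = j*h`, defined by the Cox–de Boor recursion. -/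
noncomputable def Nspl (h : ℝ) : ℕ → ℤ → ℝ → ℝ
  | 0 => fun j s => if (j : ℝ) * h ≤ s ∧ s < ((j : ℝ) + 1) * h then 1 else 0
  | d + 1 => fun j s =>
      (s - (j : ℝ) * h) / (((d : ℝ) + 1) * h) * Nspl h d j s
      + ((((j : ℝ) + (d : ℝ) + 2) * h - s) / (((d : ℝ) + 1) * h)) * Nspl h d (j + 1) s

/-- The quasi-interpolation coefficients `(α₀, α₁, α₂) = (−1/8, 5/4, −1/8)`. -/
noncomputable def alphaC : Fin 3 → ℝ := ![-(1/8), 5/4, -(1/8)]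

/-- The quasi-interpolation coefficient functional
`μ_j(f) = α₀ f(τ_j⁰) + α₁ f(τ_j¹) + α₂ f(τ_j²)` with `τ_j^k = (j+k+1/2)h`. -/
noncomputable def muQ (h : ℝ) (f : ℝ → ℝ) (j : ℤ) : ℝ :=
  ∑ k : Fin 3, alphaC k * f (((j : ℝ) + ((k : ℕ) : ℝ) + 1 / 2) * h)

/-- The quadratic B-spline quasi-interpolation operator `I_b f = Σ_j μ_j(f) N_j`. -/
noncomputable def IbQ (h : ℝ) (f : ℝ → ℝ) (x : ℝ) : ℝ :=
  ∑' j : ℤ, muQ h f j * Nspl h 2 j x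

/-- The `W^{3,∞}(ℝ)` norm: maximum over `0 ≤ m ≤ 3` of `sup_x |u^{(m)}(x)|`. -/
noncomputable def W3norm (u : ℝ → ℝ) : ℝ :=
  ⨆ p : ℝ × Fin 4, |iteratedDeriv (p.2 : ℕ) u p.1|

/-- Tensor-product quadratic B-spline. -/
noncomputable def Bspl2 (h : ℝ) (i : ℤ × ℤ) (p : ℝ × ℝ) : ℝ :=
  Nspl h 2 i.1 p.1 * Nspl h 2 i.2 p.2

/-- Tensor-product quasi-interpolation coefficient functional. -/
noncomputable def muQ2 (h : ℝ) (f : ℝ × ℝ → ℝ) (i : ℤ × ℤ) : ℝ :=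
  ∑ k : Fin 3, ∑ l : Fin 3, alphaC k * alphaC l *
    f (((i.1 : ℝ) + ((k : ℕ) : ℝ) + 1 / 2) * h, ((i.2 : ℝ) + ((l : ℕ) : ℝ) + 1 / 2) * h)

/-- Tensor-product quadratic B-spline quasi-interpolation. -/
noncomputable def IbQ2 (h : ℝ) (f : ℝ × ℝ → ℝ) (p : ℝ × ℝ) : ℝ :=
  ∑' i : ℤ × ℤ, muQ2 h f i * Bspl2 h i p

/-- The `W^{3,∞}(ℝ²)` norm: maximum over partial derivatives of total order ≤ 3 of their sup. -/
noncomputable def W3norm2 (f : ℝ × ℝ → ℝ) : ℝ :=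
  ⨆ p : (ℝ × ℝ) × Fin 4, ‖iteratedFDeriv ℝ (p.2 : ℕ) f p.1‖

section helpers

lemma Nspl_succ (h : ℝ) (d : ℕ) (j : ℤ) (s : ℝ) :
    Nspl h (d+1) j s = (s - (j : ℝ) * h) / (((d : ℝ) + 1) * h) * Nspl h d j s
      + ((((j : ℝ) + (d : ℝ) + 2) * h - s) / (((d : ℝ) + 1) * h)) * Nspl h d (j + 1) s := rfl

lemma Nspl_zero (h : ℝ) (j : ℤ) (s : ℝ) :
    Nspl h 0 j s = if (j : ℝ) * h ≤ s ∧ s < ((j : ℝ) + 1) * h then 1 else 0 := rfl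

lemma N0_eq {h x : ℝ} (hh : 0 < h) (i : ℤ) :
    Nspl h 0 i x = if i = ⌊x / h⌋ then 1 else 0 := by
  rw [Nspl_zero]
  by_cases hik : i = ⌊x / h⌋
  · subst hik
    rw [if_pos rfl, if_pos]
    constructor
    · rw [← le_div_iff₀ hh]; exact Int.floor_le _
    · rw [← div_lt_iff₀ hh]
      have := Int.lt_floor_add_one (x / h); push_cast at this ⊢; linarith
  · rw [if_neg hik, if_neg]
    rintro ⟨h1, h2⟩
    refine hik ?_
    have h1' : ((i : ℝ)) ≤ x / h := (le_div_iff₀ hh).mpr h1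
    have h2' : x / h < (i : ℝ) + 1 := by rw [div_lt_iff₀ hh]; linarith
    exact (Int.floor_eq_iff.mpr ⟨h1', h2'⟩).symm

lemma N1_eq {h x : ℝ} (hh : 0 < h) (i : ℤ) :
    Nspl h 1 i x = if i = ⌊x / h⌋ then Int.fract (x / h)
      else if i = ⌊x / h⌋ - 1 then 1 - Int.fract (x / h) else 0 := by
  have hne : h ≠ 0 := ne_of_gt hh
  set k : ℤ := ⌊x / h⌋ with hk
  have hx : x = ((k : ℝ) + Int.fract (x / h)) * h := by
    rw [Int.fract]; field_simp; rw [← hk]; ring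
  rw [show (1 : ℕ) = 0 + 1 from rfl, Nspl_succ, N0_eq hh, N0_eq hh]
  by_cases h1 : i = k
  · subst h1
    rw [if_pos rfl, if_neg (by omega), if_pos rfl]
    rw [hx]; push_cast; field_simp; ring_nf; simp [Int.fract_intCast_add, Int.fract_fract]
  · rw [if_neg h1, if_neg h1]
    by_cases h2 : i = k - 1
    · subst h2
      rw [if_pos (by omega), if_pos rfl]
      rw [hx]; push_cast; field_simp; ring_nf; simp [Int.fract_intCast_add, Int.fract_fract]
    · have h3 : ¬(i + 1 = k) := by omega
      rw [if_neg h3, if_neg h2]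
      ring

lemma N2_eq {h x : ℝ} (hh : 0 < h) (i : ℤ) :
    Nspl h 2 i x =
      if i = ⌊x / h⌋ then (Int.fract (x / h)) ^ 2 / 2
      else if i = ⌊x / h⌋ - 1 then
        (1 + 2 * Int.fract (x / h) - 2 * (Int.fract (x / h)) ^ 2) / 2
      else if i = ⌊x / h⌋ - 2 then (1 - Int.fract (x / h)) ^ 2 / 2 else 0 := by
  have hne : h ≠ 0 := ne_of_gt hh
  set k : ℤ := ⌊x / h⌋ with hk
  set y : ℝ := Int.fract (x / h) with hy
  have hx : x = ((k : ℝ) + y) * h := by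
    rw [hy, Int.fract]; field_simp; rw [← hk]; ring
  rw [show (2 : ℕ) = 1 + 1 from rfl, Nspl_succ, N1_eq hh, N1_eq hh]
  simp only [← hy, ← hk]
  by_cases h1 : i = k
  · subst h1
    have c1 : ¬(k + 1 = k) := by omega
    have c2 : ¬(k + 1 = k - 1) := by omega
    simp only [if_pos rfl, if_neg c1, if_neg c2]
    rw [hx]; push_cast; field_simp; ring
  · by_cases h2 : i = k - 1
    · subst h2
      have c1 : ¬(k - 1 = k) := by omega
      have c2 : (k - 1 + 1 = k) := by omega
      simp only [if_neg c1, if_pos c2, if_pos rfl]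
      rw [hx]; push_cast; field_simp; ring
    · by_cases h3 : i = k - 2
      · subst h3
        have c1 : ¬(k - 2 = k) := by omega
        have c2 : ¬(k - 2 + 1 = k) := by omega
        have c3 : ¬(k - 2 = k - 1) := by omega
        have c4 : (k - 2 + 1 = k - 1) := by omega
        simp only [if_neg c1, if_neg c2, if_neg c3, if_pos c4, if_pos rfl]
        rw [hx]; push_cast; field_simp; ring
      · have c1 : ¬(i + 1 = k) := by omega
        have c2 : ¬(i + 1 = k - 1) := by omega
        simp only [if_neg h1, if_neg h2, if_neg h3, if_neg c1, if_neg c2]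
        ring

lemma mvt_step {f f' : ℝ → ℝ} (hf : ∀ t, HasDerivAt f (f' t) t) {x τ K : ℝ}
    (hK : ∀ t ∈ Set.Icc (min x τ) (max x τ), |f' t| ≤ K) :
    |f τ - f x| ≤ K * |τ - x| := by
  have hx : x ∈ Set.Icc (min x τ) (max x τ) := ⟨min_le_left _ _, le_max_left _ _⟩
  have hτ : τ ∈ Set.Icc (min x τ) (max x τ) := ⟨min_le_right _ _, le_max_right _ _⟩
  have := Convex.norm_image_sub_le_of_norm_hasDerivWithin_le
    (f := f) (f' := f') (s := Set.Icc (min x τ) (max x τ))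
    (fun t _ => (hf t).hasDerivWithinAt) (fun t ht => hK t ht) (convex_Icc _ _) hx hτ
  simpa [Real.norm_eq_abs] using this

lemma dist_le_in_Icc {x τ t : ℝ} (ht : t ∈ Set.Icc (min x τ) (max x τ)) :
    |t - x| ≤ |τ - x| := by
  rcases le_total x τ with hc | hc
  · rw [min_eq_left hc, max_eq_right hc] at ht
    rw [abs_of_nonneg (by linarith [ht.1]), abs_of_nonneg (by linarith)]
    linarith [ht.2]
  · rw [min_eq_right hc, max_eq_left hc] at ht
    rw [abs_of_nonpos (by linarith [ht.2]), abs_of_nonpos (by linarith)]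
    linarith [ht.1]

lemma taylor3 {u : ℝ → ℝ} (hu : ContDiff ℝ 3 u) {M : ℝ}
    (hM : ∀ t, |iteratedDeriv 3 u t| ≤ M) (x τ : ℝ) :
    |u τ - u x - deriv u x * (τ - x) - deriv (deriv u) x / 2 * (τ - x) ^ 2|
      ≤ M * |τ - x| ^ 3 := by
  have hM0 : 0 ≤ M := (abs_nonneg _).trans (hM 0)
  have h3 : ContDiff ℝ (2 + 1) u := by exact_mod_cast hu
  have h1 : Differentiable ℝ u := (contDiff_succ_iff_deriv.mp h3).1
  have hu2 : ContDiff ℝ (1 + 1) (deriv u) := by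
    exact_mod_cast (contDiff_succ_iff_deriv.mp h3).2.2
  have h2 : Differentiable ℝ (deriv u) := (contDiff_succ_iff_deriv.mp hu2).1
  have hu1 : ContDiff ℝ (0 + 1) (deriv (deriv u)) := by
    exact_mod_cast (contDiff_succ_iff_deriv.mp hu2).2.2
  have h3' : Differentiable ℝ (deriv (deriv u)) := (contDiff_succ_iff_deriv.mp hu1).1
  have hiter : ∀ t, deriv (deriv (deriv u)) t = iteratedDeriv 3 u t := by
    intro t
    simp [iteratedDeriv_succ, iteratedDeriv_zero]
  have stepA : ∀ t, |deriv (deriv u) t - deriv (deriv u) x| ≤ M * |t - x| := by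
    intro t
    refine mvt_step (f := deriv (deriv u)) (f' := deriv (deriv (deriv u)))
      (fun s => (h3' s).hasDerivAt) (x := x) (τ := t) ?_
    intro s _
    rw [hiter s]; exact hM s
  set A := deriv u x with hA
  set B := deriv (deriv u) x with hB
  have H1 : ∀ t, HasDerivAt (fun s => deriv u s - A - B * (s - x))
      (deriv (deriv u) t - B) t := by
    intro t
    have hlin : HasDerivAt (fun s : ℝ => B * (s - x)) B t := by
      simpa using ((hasDerivAt_id t).sub_const x).const_mul B
    exact (((h2 t).hasDerivAt).sub_const A).sub hlin
  have stepB : ∀ t, |t - x| ≤ |τ - x| →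
      |deriv u t - A - B * (t - x)| ≤ M * |τ - x| * |t - x| := by
    intro t htle
    have := mvt_step (f := fun s => deriv u s - A - B * (s - x))
      (f' := fun s => deriv (deriv u) s - B) H1 (x := x) (τ := t)
      (K := M * |τ - x|) ?_
    · simpa [← hA] using this
    · intro s hs
      calc |deriv (deriv u) s - B| ≤ M * |s - x| := stepA s
        _ ≤ M * |τ - x| := by
            have := dist_le_in_Icc hs
            nlinarith [abs_nonneg (s - x)]
  have H0 : ∀ t, HasDerivAt (fun s => u s - u x - A * (s - x) - B / 2 * (s - x) ^ 2)
      (deriv u t - A - B * (t - x)) t := by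
    intro t
    have hlin : HasDerivAt (fun s : ℝ => A * (s - x)) A t := by
      simpa using ((hasDerivAt_id t).sub_const x).const_mul A
    have hsq : HasDerivAt (fun s : ℝ => B / 2 * (s - x) ^ 2) (B * (t - x)) t := by
      have := (((hasDerivAt_id t).sub_const x).pow 2).const_mul (B / 2)
      refine this.congr_deriv ?_
      simp only [id_eq]
      ring
    have := ((((h1 t).hasDerivAt).sub_const (u x)).sub hlin).sub hsq
    exact this
  have final := mvt_step (f := fun s => u s - u x - A * (s - x) - B / 2 * (s - x) ^ 2)
    (f' := fun t => deriv u t - A - B * (t - x)) H0 (x := x) (τ := τ)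
    (K := M * |τ - x| ^ 2) ?_
  · have h0 : u x - u x - A * (x - x) - B / 2 * (x - x) ^ 2 = 0 := by ring
    rw [h0, sub_zero] at final
    calc |u τ - u x - A * (τ - x) - B / 2 * (τ - x) ^ 2|
        ≤ M * |τ - x| ^ 2 * |τ - x| := final
      _ = M * |τ - x| ^ 3 := by ring
  · intro t ht
    have h1' := stepB t (dist_le_in_Icc ht)
    calc |deriv u t - A - B * (t - x)| ≤ M * |τ - x| * |t - x| := h1'
      _ ≤ M * |τ - x| * |τ - x| := by
          have := dist_le_in_Icc ht
          exact mul_le_mul_of_nonneg_left this (mul_nonneg hM0 (abs_nonneg _))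
      _ = M * |τ - x| ^ 2 := by ring

lemma remainder_bound {u : ℝ → ℝ} (hu : ContDiff ℝ 3 u) {M h : ℝ} (hh : 0 < h)
    (hM : ∀ t, |iteratedDeriv 3 u t| ≤ M) {x τ : ℝ} (hd : |τ - x| ≤ 5/2 * h) :
    |u τ - u x - deriv u x * (τ - x) - deriv (deriv u) x / 2 * (τ - x) ^ 2|
      ≤ 16 * M * h ^ 3 := by
  have hM0 : 0 ≤ M := (abs_nonneg _).trans (hM 0)
  calc |u τ - u x - deriv u x * (τ - x) - deriv (deriv u) x / 2 * (τ - x) ^ 2|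
      ≤ M * |τ - x| ^ 3 := taylor3 hu hM x τ
    _ ≤ M * (5/2 * h) ^ 3 :=
        mul_le_mul_of_nonneg_left (pow_le_pow_left₀ (abs_nonneg _) hd 3) hM0
    _ ≤ 16 * M * h ^ 3 := by nlinarith [pow_nonneg hh.le 3, hM0]

lemma combo_bound {n a b c Q : ℝ} (hn0 : 0 ≤ n) (hn1 : n ≤ 1)
    (ha : |a| ≤ Q) (hb : |b| ≤ Q) (hc : |c| ≤ Q) :
    |n * (-(1/8) * a + 5/4 * b - 1/8 * c)| ≤ 3/2 * Q := by
  have hQ : 0 ≤ Q := le_trans (abs_nonneg a) ha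
  have ha' := abs_le.mp ha
  have hb' := abs_le.mp hb
  have hc' := abs_le.mp hc
  have hE : |(-(1/8) * a + 5/4 * b - 1/8 * c)| ≤ 3/2 * Q := by
    rw [abs_le]; constructor <;> [linarith [ha'.1, ha'.2, hb'.1, hb'.2, hc'.1, hc'.2];
      linarith [ha'.1, ha'.2, hb'.1, hb'.2, hc'.1, hc'.2]]
  calc |n * (-(1/8) * a + 5/4 * b - 1/8 * c)|
      = n * |(-(1/8) * a + 5/4 * b - 1/8 * c)| := by
        rw [abs_mul, abs_of_nonneg hn0]
    _ ≤ 1 * (3/2 * Q) := mul_le_mul hn1 hE (abs_nonneg _) zero_le_one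
    _ = 3/2 * Q := one_mul _

end helpers

set_option maxHeartbeats 1000000 in
/-- Theorem 1, univariate uniform case: error estimate for the
quadratic B-spline quasi-interpolation. -/
theorem stmt0 :
    ∃ C : ℝ, 0 < C ∧ ∀ h : ℝ, 0 < h → ∀ u : ℝ → ℝ,
      ContDiff ℝ 3 u →
      (∀ m : ℕ, m ≤ 3 → ∃ M : ℝ, ∀ x : ℝ, |iteratedDeriv m u x| ≤ M) →
      ∀ x : ℝ, |u x - IbQ h u x| ≤ C * h ^ 3 * W3norm u := by
  refine ⟨100, by norm_num, ?_⟩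
  intro h hh u hu hb x
  have hne : h ≠ 0 := ne_of_gt hh
  -- W3norm facts
  obtain ⟨M0, hb0⟩ := hb 0 (by norm_num)
  obtain ⟨M1, hb1⟩ := hb 1 (by norm_num)
  obtain ⟨M2, hb2⟩ := hb 2 (by norm_num)
  obtain ⟨M3, hb3⟩ := hb 3 (by norm_num)
  have hBdd : BddAbove (Set.range fun p : ℝ × Fin 4 => |iteratedDeriv (p.2 : ℕ) u p.1|) := by
    refine ⟨max (max M0 M1) (max M2 M3), ?_⟩
    rintro z ⟨⟨t, m⟩, rfl⟩
    have e0 : M0 ≤ max (max M0 M1) (max M2 M3) := le_trans (le_max_left _ _) (le_max_left _ _)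
    have e1 : M1 ≤ max (max M0 M1) (max M2 M3) := le_trans (le_max_right _ _) (le_max_left _ _)
    have e2 : M2 ≤ max (max M0 M1) (max M2 M3) := le_trans (le_max_left _ _) (le_max_right _ _)
    have e3 : M3 ≤ max (max M0 M1) (max M2 M3) := le_trans (le_max_right _ _) (le_max_right _ _)
    fin_cases m
    · exact le_trans (hb0 t) e0
    · exact le_trans (hb1 t) e1
    · exact le_trans (hb2 t) e2
    · exact le_trans (hb3 t) e3
  have hle : ∀ t, |iteratedDeriv 3 u t| ≤ W3norm u := by
    intro t
    have := le_ciSup hBdd ((t, (3 : Fin 4)) : ℝ × Fin 4)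
    rw [W3norm]
    exact this
  have hW0 : 0 ≤ W3norm u := (abs_nonneg _).trans (hle 0)
  -- geometry
  set k : ℤ := ⌊x / h⌋ with hk
  set y : ℝ := Int.fract (x / h) with hy
  have hy0 : 0 ≤ y := Int.fract_nonneg _
  have hy1 : y < 1 := Int.fract_lt_one _
  have hx : x = ((k : ℝ) + y) * h := by
    rw [hy, Int.fract]; field_simp; rw [← hk]; ring
  -- the three B-spline values
  have n2v : Nspl h 2 k x = y ^ 2 / 2 := by
    rw [N2_eq hh, if_pos rfl, ← hy]
  have n1v : Nspl h 2 (k - 1) x = (1 + 2 * y - 2 * y ^ 2) / 2 := by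
    rw [N2_eq hh, if_neg (by omega), if_pos rfl, ← hy]
  have n0v : Nspl h 2 (k - 2) x = (1 - y) ^ 2 / 2 := by
    rw [N2_eq hh, if_neg (by omega), if_neg (by omega), if_pos rfl, ← hy]
  -- reducing the tsum
  have hIb : IbQ h u x = (1 - y) ^ 2 / 2 * muQ h u (k - 2)
      + (1 + 2 * y - 2 * y ^ 2) / 2 * muQ h u (k - 1) + y ^ 2 / 2 * muQ h u k := by
    rw [IbQ]
    rw [tsum_eq_sum (s := ({k - 2, k - 1, k} : Finset ℤ)) ?_]
    · rw [Finset.sum_insert (by simp <;> omega), Finset.sum_insert (by simp <;> omega),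
        Finset.sum_singleton, n0v, n1v, n2v]
      ring
    · intro j hj
      simp only [Finset.mem_insert, Finset.mem_singleton] at hj
      push_neg at hj
      rw [N2_eq hh, if_neg (by omega), if_neg (by omega), if_neg (by omega), mul_zero]
  clear hk hy
  clear_value k y
  -- muQ expansions
  have hmu0 : muQ h u (k - 2) = -(1/8) * u (((k : ℝ) - 3/2) * h)
      + 5/4 * u (((k : ℝ) - 1/2) * h) - 1/8 * u (((k : ℝ) + 1/2) * h) := by
    rw [muQ, Fin.sum_univ_three]
    rw [show ((((k - 2 : ℤ) : ℝ)) + (((0 : Fin 3) : ℕ) : ℝ) + 1 / 2) * h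
        = ((k : ℝ) - 3/2) * h by first | (norm_num; done) | (norm_num; exact Or.inl (by push_cast; ring))]
    rw [show ((((k - 2 : ℤ) : ℝ)) + (((1 : Fin 3) : ℕ) : ℝ) + 1 / 2) * h
        = ((k : ℝ) - 1/2) * h by first | (norm_num; done) | (norm_num; exact Or.inl (by push_cast; ring))]
    rw [show ((((k - 2 : ℤ) : ℝ)) + (((2 : Fin 3) : ℕ) : ℝ) + 1 / 2) * h
        = ((k : ℝ) + 1/2) * h by first | (norm_num; done) | (norm_num; exact Or.inl (by push_cast; ring))]
    simp only [alphaC, Matrix.cons_val_zero, Matrix.cons_val_one, Matrix.head_cons,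
      Matrix.cons_val_two, Matrix.tail_cons]
    ring
  have hmu1 : muQ h u (k - 1) = -(1/8) * u (((k : ℝ) - 1/2) * h)
      + 5/4 * u (((k : ℝ) + 1/2) * h) - 1/8 * u (((k : ℝ) + 3/2) * h) := by
    rw [muQ, Fin.sum_univ_three]
    rw [show ((((k - 1 : ℤ) : ℝ)) + (((0 : Fin 3) : ℕ) : ℝ) + 1 / 2) * h
        = ((k : ℝ) - 1/2) * h by first | (norm_num; done) | (norm_num; exact Or.inl (by push_cast; ring))]
    rw [show ((((k - 1 : ℤ) : ℝ)) + (((1 : Fin 3) : ℕ) : ℝ) + 1 / 2) * h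
        = ((k : ℝ) + 1/2) * h by first | (norm_num; done) | (norm_num; exact Or.inl (by push_cast; ring))]
    rw [show ((((k - 1 : ℤ) : ℝ)) + (((2 : Fin 3) : ℕ) : ℝ) + 1 / 2) * h
        = ((k : ℝ) + 3/2) * h by first | (norm_num; done) | (norm_num; exact Or.inl (by push_cast; ring))]
    simp only [alphaC, Matrix.cons_val_zero, Matrix.cons_val_one, Matrix.head_cons,
      Matrix.cons_val_two, Matrix.tail_cons]
    ring
  have hmu2 : muQ h u k = -(1/8) * u (((k : ℝ) + 1/2) * h)
      + 5/4 * u (((k : ℝ) + 3/2) * h) - 1/8 * u (((k : ℝ) + 5/2) * h) := by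
    rw [muQ, Fin.sum_univ_three]
    rw [show (((k : ℤ) : ℝ) + (((0 : Fin 3) : ℕ) : ℝ) + 1 / 2) * h
        = ((k : ℝ) + 1/2) * h by first | (norm_num; done) | (norm_num; exact Or.inl (by push_cast; ring))]
    rw [show (((k : ℤ) : ℝ) + (((1 : Fin 3) : ℕ) : ℝ) + 1 / 2) * h
        = ((k : ℝ) + 3/2) * h by first | (norm_num; done) | (norm_num; exact Or.inl (by push_cast; ring))]
    rw [show (((k : ℤ) : ℝ) + (((2 : Fin 3) : ℕ) : ℝ) + 1 / 2) * h
        = ((k : ℝ) + 5/2) * h by first | (norm_num; done) | (norm_num; exact Or.inl (by push_cast; ring))]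
    simp only [alphaC, Matrix.cons_val_zero, Matrix.cons_val_one, Matrix.head_cons,
      Matrix.cons_val_two, Matrix.tail_cons]
    ring
  -- remainder bounds at the five sample points
  have hdist : ∀ c : ℝ, -3/2 ≤ c → c ≤ 5/2 → |((k : ℝ) + c) * h - x| ≤ 5/2 * h := by
    intro c hc1 hc2
    rw [hx, show ((k : ℝ) + c) * h - ((k : ℝ) + y) * h = (c - y) * h by ring,
      abs_mul, abs_of_pos hh]
    have : |c - y| ≤ 5/2 := by rw [abs_le]; constructor <;> linarith
    nlinarith
  have hR0 := remainder_bound hu hh hle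
    (x := x) (τ := ((k : ℝ) - 3/2) * h)
    (by rw [show ((k : ℝ) - 3/2) * h = ((k : ℝ) + (-3/2 : ℝ)) * h by ring]
        exact hdist (-3/2) (by norm_num) (by norm_num))
  have hR1 := remainder_bound hu hh hle
    (x := x) (τ := ((k : ℝ) - 1/2) * h)
    (by rw [show ((k : ℝ) - 1/2) * h = ((k : ℝ) + (-1/2 : ℝ)) * h by ring]
        exact hdist (-1/2) (by norm_num) (by norm_num))
  have hR2 := remainder_bound hu hh hle
    (x := x) (τ := ((k : ℝ) + 1/2) * h) (hdist (1/2) (by norm_num) (by norm_num))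
  have hR3 := remainder_bound hu hh hle
    (x := x) (τ := ((k : ℝ) + 3/2) * h) (hdist (3/2) (by norm_num) (by norm_num))
  have hR4 := remainder_bound hu hh hle
    (x := x) (τ := ((k : ℝ) + 5/2) * h) (hdist (5/2) (by norm_num) (by norm_num))
  -- numerical bounds on the B-spline weights
  have w0a : (0 : ℝ) ≤ (1 - y) ^ 2 / 2 := by nlinarith
  have w0b : (1 - y) ^ 2 / 2 ≤ 1 := by nlinarith
  have w1a : (0 : ℝ) ≤ (1 + 2 * y - 2 * y ^ 2) / 2 := by nlinarith
  have w1b : (1 + 2 * y - 2 * y ^ 2) / 2 ≤ 1 := by nlinarith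
  have w2a : (0 : ℝ) ≤ y ^ 2 / 2 := by nlinarith
  have w2b : y ^ 2 / 2 ≤ 1 := by nlinarith
  -- the key algebraic identity
  set A := deriv u x with hA
  set B := deriv (deriv u) x with hB
  clear hA hB
  clear_value A B
  have key : u x - IbQ h u x =
      -( (1 - y) ^ 2 / 2 * (-(1/8) * (u (((k : ℝ) - 3/2) * h) - u x - A * (((k : ℝ) - 3/2) * h - x) - B / 2 * (((k : ℝ) - 3/2) * h - x) ^ 2)
            + 5/4 * (u (((k : ℝ) - 1/2) * h) - u x - A * (((k : ℝ) - 1/2) * h - x) - B / 2 * (((k : ℝ) - 1/2) * h - x) ^ 2)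
            - 1/8 * (u (((k : ℝ) + 1/2) * h) - u x - A * (((k : ℝ) + 1/2) * h - x) - B / 2 * (((k : ℝ) + 1/2) * h - x) ^ 2))
        + (1 + 2 * y - 2 * y ^ 2) / 2 * (-(1/8) * (u (((k : ℝ) - 1/2) * h) - u x - A * (((k : ℝ) - 1/2) * h - x) - B / 2 * (((k : ℝ) - 1/2) * h - x) ^ 2)
            + 5/4 * (u (((k : ℝ) + 1/2) * h) - u x - A * (((k : ℝ) + 1/2) * h - x) - B / 2 * (((k : ℝ) + 1/2) * h - x) ^ 2)
            - 1/8 * (u (((k : ℝ) + 3/2) * h) - u x - A * (((k : ℝ) + 3/2) * h - x) - B / 2 * (((k : ℝ) + 3/2) * h - x) ^ 2))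
        + y ^ 2 / 2 * (-(1/8) * (u (((k : ℝ) + 1/2) * h) - u x - A * (((k : ℝ) + 1/2) * h - x) - B / 2 * (((k : ℝ) + 1/2) * h - x) ^ 2)
            + 5/4 * (u (((k : ℝ) + 3/2) * h) - u x - A * (((k : ℝ) + 3/2) * h - x) - B / 2 * (((k : ℝ) + 3/2) * h - x) ^ 2)
            - 1/8 * (u (((k : ℝ) + 5/2) * h) - u x - A * (((k : ℝ) + 5/2) * h - x) - B / 2 * (((k : ℝ) + 5/2) * h - x) ^ 2)) ) := by
    rw [hIb, hmu0, hmu1, hmu2, hx]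
    ring
  have b0 := combo_bound w0a w0b hR0 hR1 hR2
  have b1 := combo_bound w1a w1b hR1 hR2 hR3
  have b2 := combo_bound w2a w2b hR2 hR3 hR4
  rw [key, abs_neg]
  have hQ : (0:ℝ) ≤ W3norm u * h ^ 3 := mul_nonneg hW0 (pow_nonneg hh.le 3)
  refine le_trans (abs_add_le _ _) ?_
  refine le_trans (add_le_add_left (abs_add_le _ _) _) ?_
  refine le_trans (add_le_add (add_le_add b0 b1) b2) ?_
  clear key b0 b1 b2 hIb hmu0 hmu1 hmu2 hR0 hR1 hR2 hR3 hR4 hdist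
  nlinarith [hQ]
end

section
/- Error estimate for the tensor-product quadratic B-spline quasi-interpolation (Theorem 1, bivariate case): there exists a constant C > 0, independent of N and of u, such that for every integer N ≥ 5 (with h = 1/N) and every function u : ℝ² → ℝ of class C³ with bounded partial derivatives up to total order 3, sup_{(s,t) ∈ ℝ²} |u(s,t) − (I_b u)(s,t)| ≤ C · h³ · ‖u‖_{W^{3,∞}(ℝ²)}. -/
open scoped BigOperators Classical

noncomputable def Bd : ℕ → ℝ → ℝ
  | 0 => fun u => if 0 ≤ u ∧ u < 1 then 1 else 0
  | d + 1 => fun u => u / ((d : ℝ) + 1) * Bd d u + (((d : ℝ) + 2 - u) / ((d : ℝ) + 1)) * Bd d (u - 1)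

lemma Nspl_eq {h : ℝ} (hh : 0 < h) (d : ℕ) (j : ℤ) (x : ℝ) :
    Nspl h d j x = Bd d (x / h - (j : ℝ)) := by
  induction d generalizing j with
  | zero =>
      simp only [Nspl, Bd]
      refine if_congr ?_ rfl rfl
      constructor
      · rintro ⟨h1, h2⟩
        constructor
        · rw [sub_nonneg, le_div_iff₀ hh]; linarith
        · rw [sub_lt_iff_lt_add, div_lt_iff₀ hh]; linarith
      · rintro ⟨h1, h2⟩
        rw [sub_nonneg, le_div_iff₀ hh] at h1
        rw [sub_lt_iff_lt_add, div_lt_iff₀ hh] at h2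
        constructor <;> linarith
  | succ d IH =>
      have hd : ((d : ℝ) + 1) ≠ 0 := by positivity
      have hne : h ≠ 0 := ne_of_gt hh
      simp only [Nspl, Bd]
      rw [IH j, IH (j + 1)]
      have e1 : (x - (j : ℝ) * h) / (((d : ℝ) + 1) * h) = (x / h - (j : ℝ)) / ((d : ℝ) + 1) := by
        field_simp
      have e2 : (((j : ℝ) + (d : ℝ) + 2) * h - x) / (((d : ℝ) + 1) * h)
          = ((d : ℝ) + 2 - (x / h - (j : ℝ))) / ((d : ℝ) + 1) := by
        field_simp; ring
      have e3 : x / h - ((j + 1 : ℤ) : ℝ) = x / h - (j : ℝ) - 1 := by push_cast; ring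
      rw [e1, e2, e3]

lemma Bd0_one {u : ℝ} (h1 : 0 ≤ u) (h2 : u < 1) : Bd 0 u = 1 := by
  simp only [Bd]; exact if_pos ⟨h1, h2⟩

lemma Bd0_zero {u : ℝ} (h : u < 0 ∨ 1 ≤ u) : Bd 0 u = 0 := by
  simp only [Bd]; rw [if_neg]; rintro ⟨a, b⟩; rcases h with h | h <;> linarith

lemma Bd1_eq (u : ℝ) : Bd 1 u = u * Bd 0 u + (2 - u) * Bd 0 (u - 1) := by
  have : Bd 1 u = u / ((0 : ℕ) + 1 : ℝ) * Bd 0 u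
      + ((((0 : ℕ) : ℝ) + 2 - u) / (((0 : ℕ) : ℝ) + 1)) * Bd 0 (u - 1) := rfl
  rw [this]; norm_num

lemma Bd2_eq (u : ℝ) : Bd 2 u = u / 2 * Bd 1 u + ((3 - u) / 2) * Bd 1 (u - 1) := by
  have : Bd 2 u = u / ((1 : ℕ) + 1 : ℝ) * Bd 1 u
      + ((((1 : ℕ) : ℝ) + 2 - u) / (((1 : ℕ) : ℝ) + 1)) * Bd 1 (u - 1) := rfl
  rw [this]; norm_num

lemma B2_val0 {t : ℝ} (h0 : 0 ≤ t) (h1 : t < 1) : Bd 2 t = t ^ 2 / 2 := by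
  have z1 : Bd 0 t = 1 := Bd0_one h0 h1
  have z2 : Bd 0 (t - 1) = 0 := Bd0_zero (by left; linarith)
  have z3 : Bd 0 (t - 1 - 1) = 0 := Bd0_zero (by left; linarith)
  rw [Bd2_eq, Bd1_eq, Bd1_eq, z1, z2, z3]; ring

lemma B2_val1 {t : ℝ} (h0 : 0 ≤ t) (h1 : t < 1) :
    Bd 2 (t + 1) = (-2 * t ^ 2 + 2 * t + 1) / 2 := by
  have z1 : Bd 0 (t + 1) = 0 := Bd0_zero (by right; linarith)
  have z2 : Bd 0 (t + 1 - 1) = 1 := by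
    rw [show t + 1 - 1 = t by ring]; exact Bd0_one h0 h1
  have z3 : Bd 0 (t + 1 - 1 - 1) = 0 := Bd0_zero (by left; linarith)
  rw [Bd2_eq, Bd1_eq, Bd1_eq, z1, z2, z3]; ring

lemma B2_val2 {t : ℝ} (h0 : 0 ≤ t) (h1 : t < 1) : Bd 2 (t + 2) = (1 - t) ^ 2 / 2 := by
  have z1 : Bd 0 (t + 2) = 0 := Bd0_zero (by right; linarith)
  have z2 : Bd 0 (t + 2 - 1) = 0 := Bd0_zero (by right; linarith)
  have z3 : Bd 0 (t + 2 - 1 - 1) = 1 := by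
    rw [show t + 2 - 1 - 1 = t by ring]; exact Bd0_one h0 h1
  rw [Bd2_eq, Bd1_eq, Bd1_eq, z1, z2, z3]; ring

lemma B2_zero {u : ℝ} (h : u < 0 ∨ 3 ≤ u) : Bd 2 u = 0 := by
  have z1 : Bd 0 u = 0 := by
    rcases h with h | h
    exacts [Bd0_zero (Or.inl (by linarith)), Bd0_zero (Or.inr (by linarith))]
  have z2 : Bd 0 (u - 1) = 0 := by
    rcases h with h | h
    exacts [Bd0_zero (Or.inl (by linarith)), Bd0_zero (Or.inr (by linarith))]
  have z3 : Bd 0 (u - 1 - 1) = 0 := by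
    rcases h with h | h
    exacts [Bd0_zero (Or.inl (by linarith)), Bd0_zero (Or.inr (by linarith))]
  rw [Bd2_eq, Bd1_eq, Bd1_eq, z1, z2, z3]; ring

lemma B2_nonneg (u : ℝ) : 0 ≤ Bd 2 u := by
  rcases lt_or_ge u 0 with h | h
  · rw [B2_zero (Or.inl h)]
  rcases le_or_gt 3 u with h3 | h3
  · rw [B2_zero (Or.inr h3)]
  rcases lt_or_ge u 1 with h1 | h1
  · rw [B2_val0 h h1]; positivity
  rcases lt_or_ge u 2 with h2 | h2
  · have e : u = (u - 1) + 1 := by ring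
    rw [e, B2_val1 (by linarith) (by linarith)]
    nlinarith
  · have e : u = (u - 2) + 2 := by ring
    rw [e, B2_val2 (by linarith) (by linarith)]
    positivity

lemma Nspl_zero_s1 {h : ℝ} (hh : 0 < h) {x : ℝ} {j : ℤ}
    (hj : j < ⌊x / h⌋ - 2 ∨ ⌊x / h⌋ < j) : Nspl h 2 j x = 0 := by
  rw [Nspl_eq hh]
  apply B2_zero
  have h1 : ((⌊x / h⌋ : ℤ) : ℝ) ≤ x / h := Int.floor_le _
  have h2 : x / h < (⌊x / h⌋ : ℝ) + 1 := Int.lt_floor_add_one _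
  rcases hj with hj | hj
  · right
    have hj' : j ≤ ⌊x / h⌋ - 3 := by omega
    have : (j : ℝ) ≤ (⌊x / h⌋ : ℝ) - 3 := by exact_mod_cast hj'
    linarith
  · left
    have : (⌊x / h⌋ : ℝ) + 1 ≤ (j : ℝ) := by exact_mod_cast hj
    linarith

lemma key1 {h : ℝ} (hh : 0 < h) (f : ℝ → ℝ) (x : ℝ) :
    IbQ h f x = muQ h f (⌊x / h⌋ - 2) * Nspl h 2 (⌊x / h⌋ - 2) x
      + muQ h f (⌊x / h⌋ - 1) * Nspl h 2 (⌊x / h⌋ - 1) x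
      + muQ h f ⌊x / h⌋ * Nspl h 2 ⌊x / h⌋ x := by
  rw [IbQ, tsum_eq_sum (s := ({⌊x / h⌋ - 2, ⌊x / h⌋ - 1, ⌊x / h⌋} : Finset ℤ))
    (by
      intro j hj
      simp only [Finset.mem_insert, Finset.mem_singleton] at hj
      push_neg at hj
      rw [Nspl_zero_s1 hh (by omega), mul_zero])]
  rw [Finset.sum_insert (by simp only [Finset.mem_insert, Finset.mem_singleton]; push_neg; omega), Finset.sum_insert (by simp only [Finset.mem_insert, Finset.mem_singleton]; push_neg; omega),
    Finset.sum_singleton]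
  ring

lemma Nval0 {h : ℝ} (hh : 0 < h) (x : ℝ) :
    Nspl h 2 ⌊x / h⌋ x = (Int.fract (x / h)) ^ 2 / 2 := by
  rw [Nspl_eq hh, Int.self_sub_floor]
  exact B2_val0 (Int.fract_nonneg _) (Int.fract_lt_one _)

lemma Nval1 {h : ℝ} (hh : 0 < h) (x : ℝ) :
    Nspl h 2 (⌊x / h⌋ - 1) x
      = (-2 * (Int.fract (x / h)) ^ 2 + 2 * Int.fract (x / h) + 1) / 2 := by
  rw [Nspl_eq hh]
  have e : x / h - ((⌊x / h⌋ - 1 : ℤ) : ℝ) = Int.fract (x / h) + 1 := by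
    rw [Int.fract]; push_cast; ring
  rw [e]
  exact B2_val1 (Int.fract_nonneg _) (Int.fract_lt_one _)

lemma Nval2 {h : ℝ} (hh : 0 < h) (x : ℝ) :
    Nspl h 2 (⌊x / h⌋ - 2) x = (1 - Int.fract (x / h)) ^ 2 / 2 := by
  rw [Nspl_eq hh]
  have e : x / h - ((⌊x / h⌋ - 2 : ℤ) : ℝ) = Int.fract (x / h) + 2 := by
    rw [Int.fract]; push_cast; ring
  rw [e]
  exact B2_val2 (Int.fract_nonneg _) (Int.fract_lt_one _)

lemma sumN {h : ℝ} (hh : 0 < h) (x : ℝ) :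
    Nspl h 2 (⌊x / h⌋ - 2) x + Nspl h 2 (⌊x / h⌋ - 1) x + Nspl h 2 ⌊x / h⌋ x = 1 := by
  rw [Nval0 hh, Nval1 hh, Nval2 hh]; ring

lemma repro {h : ℝ} (hh : 0 < h) (a b c x : ℝ) :
    IbQ h (fun s => a + b * s + c * s ^ 2) x = a + b * x + c * x ^ 2 := by
  have hne : h ≠ 0 := ne_of_gt hh
  rw [key1 hh, Nval0 hh, Nval1 hh, Nval2 hh]
  simp only [muQ, alphaC, Fin.sum_univ_three]
  push_cast
  set m : ℝ := (⌊x / h⌋ : ℝ) with hm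
  set t : ℝ := Int.fract (x / h) with htt
  have hx : x = (m + t) * h := by
    rw [hm, htt, Int.floor_add_fract, div_mul_cancel₀ _ hne]
  rw [hx]
  norm_num
  ring

lemma idw_eq {g : ℝ → ℝ} (hg : ContDiff ℝ 3 g) {s : Set ℝ} (hs : UniqueDiffOn ℝ s)
    {n : ℕ} (hn : n ≤ 3) : ∀ x ∈ s, iteratedDerivWithin n g s x = iteratedDeriv n g x := by
  induction n with
  | zero => intro x hx; simp [iteratedDerivWithin_zero, iteratedDeriv_zero]
  | succ n IH =>
      intro x hx
      rw [iteratedDerivWithin_succ]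
      have hEq : Set.EqOn (iteratedDerivWithin n g s) (iteratedDeriv n g) s :=
        fun y hy => IH (by omega) y hy
      rw [derivWithin_congr hEq (hEq hx)]
      have hdiff : DifferentiableAt ℝ (iteratedDeriv n g) x :=
        (hg.differentiable_iteratedDeriv n (by exact_mod_cast Nat.lt_of_lt_of_le (Nat.lt_succ_self n) hn)) x
      rw [hdiff.derivWithin (hs.uniqueDiffWithinAt hx), ← iteratedDeriv_succ]

lemma taylor2_le {g : ℝ → ℝ} (hg : ContDiff ℝ 3 g) {M : ℝ}
    (hM : ∀ z, |iteratedDeriv 3 g z| ≤ M) {x y : ℝ} (hxy : x ≤ y) :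
    |g y - (g x + deriv g x * (y - x) + iteratedDeriv 2 g x * (y - x) ^ 2 / 2)|
      ≤ M * |y - x| ^ 3 := by
  have hM0 : 0 ≤ M := le_trans (abs_nonneg _) (hM 0)
  rcases eq_or_lt_of_le hxy with rfl | hlt
  · simp [hM0]
  have hs : UniqueDiffOn ℝ (Set.Icc x y) := uniqueDiffOn_Icc hlt
  have hxm : x ∈ Set.Icc x y := Set.left_mem_Icc.2 hxy
  have hbound : ∀ z ∈ Set.Icc x y,
      ‖iteratedDerivWithin 3 g (Set.Icc x y) z‖ ≤ M := by
    intro z hz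
    rw [idw_eq hg hs le_rfl z hz, Real.norm_eq_abs]
    exact hM z
  have hcd : ContDiffOn ℝ ((2 : ℕ) + 1) g (Set.Icc x y) := by
    exact_mod_cast hg.contDiffOn
  have := taylor_mean_remainder_bound (n := 2) hxy hcd
    (Set.right_mem_Icc.2 hxy) hbound
  have htev : taylorWithinEval g 2 (Set.Icc x y) x y
      = g x + deriv g x * (y - x) + iteratedDeriv 2 g x * (y - x) ^ 2 / 2 := by
    rw [taylor_within_apply]
    rw [Finset.sum_range_succ, Finset.sum_range_succ, Finset.sum_range_one]
    rw [idw_eq hg hs (by norm_num) x hxm, idw_eq hg hs (by norm_num) x hxm,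
      idw_eq hg hs (by norm_num) x hxm]
    simp [iteratedDeriv_zero, iteratedDeriv_one]
    ring
  rw [htev] at this
  rw [Real.norm_eq_abs] at this
  calc |g y - (g x + deriv g x * (y - x) + iteratedDeriv 2 g x * (y - x) ^ 2 / 2)|
      ≤ M * (y - x) ^ 3 / 2 := by simpa using this
    _ ≤ M * |y - x| ^ 3 := by
        rw [abs_of_nonneg (by linarith : (0:ℝ) ≤ y - x)]
        nlinarith [pow_nonneg (by linarith : (0:ℝ) ≤ y - x) 3]

lemma taylor2 {g : ℝ → ℝ} (hg : ContDiff ℝ 3 g) {M : ℝ}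
    (hM : ∀ z, |iteratedDeriv 3 g z| ≤ M) (x y : ℝ) :
    |g y - (g x + deriv g x * (y - x) + iteratedDeriv 2 g x * (y - x) ^ 2 / 2)|
      ≤ M * |y - x| ^ 3 := by
  rcases le_total x y with hxy | hxy
  · exact taylor2_le hg hM hxy
  · -- reflect
    set g' : ℝ → ℝ := fun z => g (-z) with hg'
    have hcd : ContDiff ℝ 3 g' := hg.comp contDiff_neg
    have hM' : ∀ z, |iteratedDeriv 3 g' z| ≤ M := by
      intro z
      rw [hg', iteratedDeriv_comp_neg]
      simpa [abs_mul] using hM (-z)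
    have hxy' : -x ≤ -y := by linarith
    have h2 := taylor2_le hcd hM' hxy'
    have e1 : deriv g' (-x) = -deriv g x := by
      have := iteratedDeriv_comp_neg 1 g (-x)
      simpa [iteratedDeriv_one] using this
    have e2 : iteratedDeriv 2 g' (-x) = iteratedDeriv 2 g x := by
      have := iteratedDeriv_comp_neg 2 g (-x)
      simpa using this
    rw [e1, e2] at h2
    have e3 : g' (-y) = g y := by simp [hg']
    have e4 : g' (-x) = g x := by simp [hg']
    rw [e3, e4] at h2
    calc |g y - (g x + deriv g x * (y - x) + iteratedDeriv 2 g x * (y - x) ^ 2 / 2)|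
        = |g y - (g x + -deriv g x * (-y - -x) + iteratedDeriv 2 g x * (-y - -x) ^ 2 / 2)| := by
          ring_nf
      _ ≤ M * |-y - -x| ^ 3 := h2
      _ = M * |y - x| ^ 3 := by rw [show -y - -x = -(y - x) by ring, abs_neg]

lemma fderiv_shift {G : Type*} [NormedAddCommGroup G] [NormedSpace ℝ G]
    (g : (ℝ × ℝ) → G) (v x : ℝ × ℝ) :
    fderiv ℝ (fun q => g (q + v)) x = fderiv ℝ g (x + v) := by
  by_cases hd : DifferentiableAt ℝ g (x + v)
  · have h1 : HasFDerivAt (fun q : ℝ × ℝ => q + v) (ContinuousLinearMap.id ℝ (ℝ × ℝ)) x :=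
      (hasFDerivAt_id x).add_const v
    have h2 := (hd.hasFDerivAt.comp x h1).fderiv
    simpa [Function.comp_def] using h2
  · have hd2 : ¬ DifferentiableAt ℝ (fun q => g (q + v)) x := by
      intro hcon
      apply hd
      have he : g = (fun q : ℝ × ℝ => g (q + v)) ∘ (fun q : ℝ × ℝ => q - v) := by
        funext q; simp
      rw [he]
      have hcon' : DifferentiableAt ℝ (fun q : ℝ × ℝ => g (q + v)) (x + v - v) := by
        simpa using hcon
      exact hcon'.comp (x + v) (differentiableAt_id.sub_const v)
    rw [fderiv_zero_of_not_differentiableAt hd, fderiv_zero_of_not_differentiableAt hd2]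

lemma itshift (f : ℝ × ℝ → ℝ) (v : ℝ × ℝ) : ∀ n : ℕ,
    (iteratedFDeriv ℝ n (fun q => f (q + v))) = fun x => iteratedFDeriv ℝ n f (x + v) := by
  intro n
  induction n with
  | zero => funext x; ext m; simp [iteratedFDeriv_zero_apply]
  | succ n IH =>
      funext x
      ext m
      rw [iteratedFDeriv_succ_apply_left, iteratedFDeriv_succ_apply_left, IH, fderiv_shift]

lemma sliceD_fst (u : ℝ × ℝ → ℝ) (hu : ContDiff ℝ 3 u) (c y : ℝ) :
    |iteratedDeriv 3 (fun z : ℝ => u (z, c)) y| ≤ ‖iteratedFDeriv ℝ 3 u (y, c)‖ := by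
  have hcomp : (fun z : ℝ => u (z, c))
      = (fun q : ℝ × ℝ => u (q + (0, c))) ∘ (ContinuousLinearMap.inl ℝ ℝ ℝ) := by
    funext z
    simp [Function.comp]
  have hsh : ContDiff ℝ 3 (fun q : ℝ × ℝ => u (q + (0, c))) :=
    hu.comp (contDiff_id.add contDiff_const)
  rw [iteratedDeriv_eq_iteratedFDeriv, hcomp,
    ContinuousLinearMap.iteratedFDeriv_comp_right _ hsh _ (le_refl _)]
  rw [itshift u ((0 : ℝ), c) 3]
  have harg : (ContinuousLinearMap.inl ℝ ℝ ℝ) y + ((0 : ℝ), c) = (y, c) := by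
    simp
  rw [ContinuousMultilinearMap.compContinuousLinearMap_apply]
  simp only [harg]
  calc |iteratedFDeriv ℝ 3 u (y, c) fun i => (ContinuousLinearMap.inl ℝ ℝ ℝ) 1|
      = ‖iteratedFDeriv ℝ 3 u (y, c) fun i => (ContinuousLinearMap.inl ℝ ℝ ℝ) 1‖ :=
        (Real.norm_eq_abs _).symm
    _ ≤ ‖iteratedFDeriv ℝ 3 u (y, c)‖ * ∏ _i : Fin 3, ‖(ContinuousLinearMap.inl ℝ ℝ ℝ) 1‖ :=
        ContinuousMultilinearMap.le_opNorm _ _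
    _ = ‖iteratedFDeriv ℝ 3 u (y, c)‖ := by
        simp [Prod.norm_def]

lemma sliceD_snd (u : ℝ × ℝ → ℝ) (hu : ContDiff ℝ 3 u) (c y : ℝ) :
    |iteratedDeriv 3 (fun z : ℝ => u (c, z)) y| ≤ ‖iteratedFDeriv ℝ 3 u (c, y)‖ := by
  have hcomp : (fun z : ℝ => u (c, z))
      = (fun q : ℝ × ℝ => u (q + (c, 0))) ∘ (ContinuousLinearMap.inr ℝ ℝ ℝ) := by
    funext z
    simp [Function.comp]
  have hsh : ContDiff ℝ 3 (fun q : ℝ × ℝ => u (q + (c, 0))) :=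
    hu.comp (contDiff_id.add contDiff_const)
  rw [iteratedDeriv_eq_iteratedFDeriv, hcomp,
    ContinuousLinearMap.iteratedFDeriv_comp_right _ hsh _ (le_refl _)]
  rw [itshift u (c, (0 : ℝ)) 3]
  have harg : (ContinuousLinearMap.inr ℝ ℝ ℝ) y + (c, (0 : ℝ)) = (c, y) := by
    simp
  rw [ContinuousMultilinearMap.compContinuousLinearMap_apply]
  simp only [harg]
  calc |iteratedFDeriv ℝ 3 u (c, y) fun i => (ContinuousLinearMap.inr ℝ ℝ ℝ) 1|
      = ‖iteratedFDeriv ℝ 3 u (c, y) fun i => (ContinuousLinearMap.inr ℝ ℝ ℝ) 1‖ :=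
        (Real.norm_eq_abs _).symm
    _ ≤ ‖iteratedFDeriv ℝ 3 u (c, y)‖ * ∏ _i : Fin 3, ‖(ContinuousLinearMap.inr ℝ ℝ ℝ) 1‖ :=
        ContinuousMultilinearMap.le_opNorm _ _
    _ = ‖iteratedFDeriv ℝ 3 u (c, y)‖ := by
        simp [Prod.norm_def]

lemma muQ_expand (h : ℝ) (f : ℝ → ℝ) (j : ℤ) :
    muQ h f j = -(1/8) * f (((j : ℝ) + 0 + 1/2) * h) + 5/4 * f (((j : ℝ) + 1 + 1/2) * h)
      + -(1/8) * f (((j : ℝ) + 2 + 1/2) * h) := by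
  rw [muQ, Fin.sum_univ_three]
  norm_num [alphaC, Matrix.cons_val_two]

lemma combo3 {p0 p1 p2 q0 q1 q2 A : ℝ} (h0 : |p0 - q0| ≤ A) (h1 : |p1 - q1| ≤ A)
    (h2 : |p2 - q2| ≤ A) :
    |(-(1/8) * p0 + 5/4 * p1 + -(1/8) * p2) - (-(1/8) * q0 + 5/4 * q1 + -(1/8) * q2)|
      ≤ 3/2 * A := by
  have a0 := abs_le.1 h0
  have a1 := abs_le.1 h1
  have a2 := abs_le.1 h2
  rw [abs_le]
  constructor <;> linarith [a0.1, a0.2, a1.1, a1.2, a2.1, a2.2]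

lemma comboN {c0 c1 c2 N0 N1 N2 B : ℝ} (hb0 : |c0| ≤ B) (hb1 : |c1| ≤ B) (hb2 : |c2| ≤ B)
    (hN0 : 0 ≤ N0) (hN1 : 0 ≤ N1) (hN2 : 0 ≤ N2) (hs : N0 + N1 + N2 = 1) :
    |c0 * N0 + c1 * N1 + c2 * N2| ≤ B := by
  calc |c0 * N0 + c1 * N1 + c2 * N2| ≤ |c0 * N0| + |c1 * N1| + |c2 * N2| :=
        abs_add_three _ _ _
    _ = |c0| * N0 + |c1| * N1 + |c2| * N2 := by
        rw [abs_mul, abs_mul, abs_mul, abs_of_nonneg hN0, abs_of_nonneg hN1, abs_of_nonneg hN2]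
    _ ≤ B * N0 + B * N1 + B * N2 := by gcongr
    _ = B := by rw [← mul_add, ← mul_add, hs, mul_one]

lemma err1 {h : ℝ} (hh : 0 < h) {g : ℝ → ℝ} (hg : ContDiff ℝ 3 g) {M : ℝ}
    (hM : ∀ y, |iteratedDeriv 3 g y| ≤ M) (x : ℝ) :
    |g x - IbQ h g x| ≤ 24 * h ^ 3 * M := by
  have hM0 : 0 ≤ M := le_trans (abs_nonneg _) (hM 0)
  set b1 : ℝ := deriv g x with hb1
  set b2 : ℝ := iteratedDeriv 2 g x with hb2
  set P : ℝ → ℝ := fun y => g x + b1 * (y - x) + b2 * (y - x) ^ 2 / 2 with hP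
  have hrepr : IbQ h P x = g x := by
    have h0 := repro hh (g x - b1 * x + b2 * x ^ 2 / 2) (b1 - b2 * x) (b2 / 2) x
    have e : P = fun s => g x - b1 * x + b2 * x ^ 2 / 2 + (b1 - b2 * x) * s
        + b2 / 2 * s ^ 2 := by
      funext s; rw [hP]; ring
    rw [e, h0]; ring
  have hPg : ∀ y : ℝ, |y - x| ≤ 5 / 2 * h → |P y - g y| ≤ 125 / 8 * h ^ 3 * M := by
    intro y hy
    have ht := taylor2 hg hM x y
    calc |P y - g y| = |g y - P y| := abs_sub_comm _ _
      _ ≤ M * |y - x| ^ 3 := ht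
      _ ≤ M * (5 / 2 * h) ^ 3 := by
          have h0 := abs_nonneg (y - x)
          gcongr
      _ = 125 / 8 * h ^ 3 * M := by ring
  set m : ℤ := ⌊x / h⌋ with hm
  have hfl1 : ((m : ℝ)) ≤ x / h := Int.floor_le _
  have hfl2 : x / h < (m : ℝ) + 1 := Int.lt_floor_add_one _
  have hx1 : (m : ℝ) * h ≤ x := by rw [← le_div_iff₀ hh]; exact hfl1
  have hx2 : x < ((m : ℝ) + 1) * h := by rw [← div_lt_iff₀ hh]; exact hfl2
  have hcoef : ∀ j : ℤ, m - 2 ≤ j → j ≤ m →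
      |muQ h P j - muQ h g j| ≤ 375 / 16 * h ^ 3 * M := by
    intro j hj1 hj2
    have hj1' : (m : ℝ) - 2 ≤ (j : ℝ) := by exact_mod_cast hj1
    have hj2' : (j : ℝ) ≤ (m : ℝ) := by exact_mod_cast hj2
    have hnode : ∀ k : ℝ, 0 ≤ k → k ≤ 2 → |((j : ℝ) + k + 1 / 2) * h - x| ≤ 5 / 2 * h := by
      intro k hk0 hk2
      rw [abs_le]
      constructor
      · nlinarith [mul_le_mul_of_nonneg_right hj1' hh.le,
          mul_le_mul_of_nonneg_right hk0 hh.le]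
      · nlinarith [mul_le_mul_of_nonneg_right hj2' hh.le,
          mul_le_mul_of_nonneg_right hk2 hh.le]
    rw [muQ_expand h P j, muQ_expand h g j]
    have e0 := hPg (((j : ℝ) + 0 + 1/2) * h) (hnode 0 le_rfl (by norm_num))
    have e1 := hPg (((j : ℝ) + 1 + 1/2) * h) (hnode 1 (by norm_num) (by norm_num))
    have e2 := hPg (((j : ℝ) + 2 + 1/2) * h) (hnode 2 (by norm_num) le_rfl)
    calc |(-(1/8) * P (((j : ℝ) + 0 + 1/2) * h) + 5/4 * P (((j : ℝ) + 1 + 1/2) * h)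
          + -(1/8) * P (((j : ℝ) + 2 + 1/2) * h))
        - (-(1/8) * g (((j : ℝ) + 0 + 1/2) * h) + 5/4 * g (((j : ℝ) + 1 + 1/2) * h)
          + -(1/8) * g (((j : ℝ) + 2 + 1/2) * h))|
        ≤ 3/2 * (125 / 8 * h ^ 3 * M) := combo3 e0 e1 e2
      _ = 375 / 16 * h ^ 3 * M := by ring
  have hgx : g x = muQ h P (m - 2) * Nspl h 2 (m - 2) x
      + muQ h P (m - 1) * Nspl h 2 (m - 1) x + muQ h P m * Nspl h 2 m x := by
    rw [← hrepr, key1 hh]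
  have hN0 : 0 ≤ Nspl h 2 (m - 2) x := by rw [Nspl_eq hh]; exact B2_nonneg _
  have hN1 : 0 ≤ Nspl h 2 (m - 1) x := by rw [Nspl_eq hh]; exact B2_nonneg _
  have hN2 : 0 ≤ Nspl h 2 m x := by rw [Nspl_eq hh]; exact B2_nonneg _
  have hNsum : Nspl h 2 (m - 2) x + Nspl h 2 (m - 1) x + Nspl h 2 m x = 1 := sumN hh x
  have hc0 : |muQ h P (m - 2) - muQ h g (m - 2)| ≤ 375 / 16 * h ^ 3 * M :=
    hcoef (m - 2) (by omega) (by omega)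
  have hc1 : |muQ h P (m - 1) - muQ h g (m - 1)| ≤ 375 / 16 * h ^ 3 * M :=
    hcoef (m - 1) (by omega) (by omega)
  have hc2 : |muQ h P m - muQ h g m| ≤ 375 / 16 * h ^ 3 * M := hcoef m (by omega) le_rfl
  have e : g x - IbQ h g x
      = (muQ h P (m - 2) - muQ h g (m - 2)) * Nspl h 2 (m - 2) x
        + (muQ h P (m - 1) - muQ h g (m - 1)) * Nspl h 2 (m - 1) x
        + (muQ h P m - muQ h g m) * Nspl h 2 m x := by
    rw [hgx, key1 hh g x]; ring
  rw [e]
  have hfin := comboN hc0 hc1 hc2 hN0 hN1 hN2 hNsum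
  have hp : 0 ≤ h ^ 3 * M := mul_nonneg (pow_nonneg hh.le 3) hM0
  calc |(muQ h P (m - 2) - muQ h g (m - 2)) * Nspl h 2 (m - 2) x
        + (muQ h P (m - 1) - muQ h g (m - 1)) * Nspl h 2 (m - 1) x
        + (muQ h P m - muQ h g m) * Nspl h 2 m x| ≤ 375 / 16 * h ^ 3 * M := hfin
    _ ≤ 24 * h ^ 3 * M := by nlinarith

lemma mu2_eq (h : ℝ) (u : ℝ × ℝ → ℝ) (a b : ℤ) :
    muQ2 h u (a, b) = muQ h (fun x => muQ h (fun y => u (x, y)) b) a := by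
  simp [muQ, muQ2, Finset.mul_sum, mul_assoc]

lemma sum3 (f : ℤ → ℝ) (m : ℤ) :
    ∑ j ∈ ({m - 2, m - 1, m} : Finset ℤ), f j = f (m - 2) + f (m - 1) + f m := by
  rw [Finset.sum_insert (by simp only [Finset.mem_insert, Finset.mem_singleton]; push_neg; omega),
    Finset.sum_insert (by simp only [Finset.mem_singleton]; omega), Finset.sum_singleton]
  ring

lemma key2 {h : ℝ} (hh : 0 < h) (u : ℝ × ℝ → ℝ) (s t : ℝ) :
    IbQ2 h u (s, t)
      = Nspl h 2 (⌊t / h⌋ - 2) t * IbQ h (fun x => muQ h (fun y => u (x, y)) (⌊t / h⌋ - 2)) s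
        + Nspl h 2 (⌊t / h⌋ - 1) t * IbQ h (fun x => muQ h (fun y => u (x, y)) (⌊t / h⌋ - 1)) s
        + Nspl h 2 ⌊t / h⌋ t * IbQ h (fun x => muQ h (fun y => u (x, y)) ⌊t / h⌋) s := by
  rw [IbQ2, tsum_eq_sum
    (s := ({⌊s / h⌋ - 2, ⌊s / h⌋ - 1, ⌊s / h⌋} : Finset ℤ)
      ×ˢ ({⌊t / h⌋ - 2, ⌊t / h⌋ - 1, ⌊t / h⌋} : Finset ℤ))
    (by
      intro ab hab
      rw [Finset.mem_product] at hab
      push_neg at hab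
      rw [Bspl2]
      by_cases h1 : ab.1 ∈ ({⌊s / h⌋ - 2, ⌊s / h⌋ - 1, ⌊s / h⌋} : Finset ℤ)
      · have h2 := hab h1
        simp only [Finset.mem_insert, Finset.mem_singleton] at h2
        push_neg at h2
        rw [Nspl_zero_s1 hh (x := t) (by omega)]
        ring
      · simp only [Finset.mem_insert, Finset.mem_singleton] at h1
        push_neg at h1
        rw [Nspl_zero_s1 hh (x := s) (by omega)]
        ring)]
  rw [Finset.sum_product]
  rw [sum3 (fun a => ∑ b ∈ ({⌊t / h⌋ - 2, ⌊t / h⌋ - 1, ⌊t / h⌋} : Finset ℤ),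
      muQ2 h u (a, b) * Bspl2 h (a, b) (s, t)) ⌊s / h⌋]
  rw [sum3, sum3, sum3]
  simp only [Bspl2, mu2_eq]
  rw [key1 hh (fun x => muQ h (fun y => u (x, y)) (⌊t / h⌋ - 2)) s,
    key1 hh (fun x => muQ h (fun y => u (x, y)) (⌊t / h⌋ - 1)) s,
    key1 hh (fun x => muQ h (fun y => u (x, y)) ⌊t / h⌋) s]
  ring

lemma muQ_lin {h a0 a1 a2 : ℝ} (f0 f1 f2 : ℝ → ℝ) (j : ℤ) :
    muQ h (fun x => a0 * f0 x + a1 * f1 x + a2 * f2 x) j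
      = a0 * muQ h f0 j + a1 * muQ h f1 j + a2 * muQ h f2 j := by
  simp only [muQ, Fin.sum_univ_three]
  ring

lemma IbQ_lin {h : ℝ} (hh : 0 < h) (a0 a1 a2 : ℝ) (f0 f1 f2 : ℝ → ℝ) (s : ℝ) :
    IbQ h (fun x => a0 * f0 x + a1 * f1 x + a2 * f2 x) s
      = a0 * IbQ h f0 s + a1 * IbQ h f1 s + a2 * IbQ h f2 s := by
  rw [key1 hh, key1 hh f0, key1 hh f1, key1 hh f2, muQ_lin, muQ_lin, muQ_lin]
  ring


/-- Theorem 1, bivariate case: error estimate for the tensor-product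
quadratic B-spline quasi-interpolation on the uniform mesh with `h = 1/N`. -/
theorem stmt1 :
    ∃ C : ℝ, 0 < C ∧ ∀ N : ℕ, 5 ≤ N → ∀ u : ℝ × ℝ → ℝ,
      ContDiff ℝ 3 u →
      (∀ m : ℕ, m ≤ 3 → ∃ M : ℝ, ∀ x : ℝ × ℝ, ‖iteratedFDeriv ℝ m u x‖ ≤ M) →
      ∀ p : ℝ × ℝ, |u p - IbQ2 (1 / N) u p| ≤ C * (1 / N : ℝ) ^ 3 * W3norm2 u := by

  refine ⟨60, by norm_num, ?_⟩
  intro N hN u hu hb p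
  obtain ⟨s, t⟩ := p
  set h : ℝ := 1 / (N : ℝ) with hhdef
  have hNpos : (0 : ℝ) < N := by
    have : (5 : ℝ) ≤ (N : ℝ) := by exact_mod_cast hN
    linarith
  have hh : 0 < h := by rw [hhdef]; positivity
  set W := W3norm2 u with hW
  -- uniform bound on third derivatives
  obtain ⟨M0, hM0⟩ := hb 0 (by norm_num)
  obtain ⟨M1, hM1⟩ := hb 1 (by norm_num)
  obtain ⟨M2, hM2⟩ := hb 2 (by norm_num)
  obtain ⟨M3, hM3⟩ := hb 3 le_rfl
  have hbdd : BddAbove (Set.range fun q : (ℝ × ℝ) × Fin 4 =>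
      ‖iteratedFDeriv ℝ (q.2 : ℕ) u q.1‖) := by
    refine ⟨max (max M0 M1) (max M2 M3), ?_⟩
    rintro _ ⟨⟨x, i⟩, rfl⟩
    fin_cases i
    · exact le_trans (hM0 x) (le_max_of_le_left (le_max_left _ _))
    · exact le_trans (hM1 x) (le_max_of_le_left (le_max_right _ _))
    · exact le_trans (hM2 x) (le_max_of_le_right (le_max_left _ _))
    · exact le_trans (hM3 x) (le_max_of_le_right (le_max_right _ _))
  have hW3 : ∀ x : ℝ × ℝ, ‖iteratedFDeriv ℝ 3 u x‖ ≤ W := by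
    intro x
    have := le_ciSup hbdd (⟨x, (3 : Fin 4)⟩ : (ℝ × ℝ) × Fin 4)
    exact this
  -- first term
  have hgs : ContDiff ℝ 3 (fun y => u (s, y)) := hu.comp (contDiff_const.prodMk contDiff_id)
  have hMg : ∀ y, |iteratedDeriv 3 (fun y => u (s, y)) y| ≤ W :=
    fun y => (sliceD_snd u hu s y).trans (hW3 _)
  have T1 : |u (s, t) - IbQ h (fun y => u (s, y)) t| ≤ 24 * h ^ 3 * W :=
    err1 hh hgs hMg t
  -- second term pieces
  have T2 : ∀ b : ℤ,
      |muQ h (fun y => u (s, y)) b - IbQ h (fun x => muQ h (fun y => u (x, y)) b) s|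
        ≤ 36 * h ^ 3 * W := by
    intro b
    set c0 : ℝ := ((b : ℝ) + 0 + 1 / 2) * h
    set c1 : ℝ := ((b : ℝ) + 1 + 1 / 2) * h
    set c2 : ℝ := ((b : ℝ) + 2 + 1 / 2) * h
    have E : ∀ c : ℝ, |u (s, c) - IbQ h (fun x => u (x, c)) s| ≤ 24 * h ^ 3 * W := by
      intro c
      exact err1 hh (hu.comp (contDiff_id.prodMk contDiff_const))
        (fun y => (sliceD_fst u hu c y).trans (hW3 _)) s
    have hfun : (fun x => muQ h (fun y => u (x, y)) b)
        = fun x => -(1/8) * u (x, c0) + 5/4 * u (x, c1) + -(1/8) * u (x, c2) := by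
      funext x
      rw [muQ_expand]
    have hsplit : IbQ h (fun x => muQ h (fun y => u (x, y)) b) s
        = -(1/8) * IbQ h (fun x => u (x, c0)) s + 5/4 * IbQ h (fun x => u (x, c1)) s
          + -(1/8) * IbQ h (fun x => u (x, c2)) s := by
      rw [hfun, IbQ_lin hh]
    have hpt : muQ h (fun y => u (s, y)) b
        = -(1/8) * u (s, c0) + 5/4 * u (s, c1) + -(1/8) * u (s, c2) := by
      rw [muQ_expand]
    rw [hsplit, hpt]
    calc |(-(1/8) * u (s, c0) + 5/4 * u (s, c1) + -(1/8) * u (s, c2))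
          - (-(1/8) * IbQ h (fun x => u (x, c0)) s + 5/4 * IbQ h (fun x => u (x, c1)) s
            + -(1/8) * IbQ h (fun x => u (x, c2)) s)|
        ≤ 3/2 * (24 * h ^ 3 * W) := combo3 (E c0) (E c1) (E c2)
      _ = 36 * h ^ 3 * W := by ring
  -- assemble
  have hN0 : 0 ≤ Nspl h 2 (⌊t / h⌋ - 2) t := by rw [Nspl_eq hh]; exact B2_nonneg _
  have hN1 : 0 ≤ Nspl h 2 (⌊t / h⌋ - 1) t := by rw [Nspl_eq hh]; exact B2_nonneg _
  have hN2 : 0 ≤ Nspl h 2 ⌊t / h⌋ t := by rw [Nspl_eq hh]; exact B2_nonneg _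
  have hNsum : Nspl h 2 (⌊t / h⌋ - 2) t + Nspl h 2 (⌊t / h⌋ - 1) t + Nspl h 2 ⌊t / h⌋ t = 1 :=
    sumN hh t
  have eq : u (s, t) - IbQ2 h u (s, t)
      = (u (s, t) - IbQ h (fun y => u (s, y)) t)
        + ((muQ h (fun y => u (s, y)) (⌊t / h⌋ - 2)
              - IbQ h (fun x => muQ h (fun y => u (x, y)) (⌊t / h⌋ - 2)) s)
            * Nspl h 2 (⌊t / h⌋ - 2) t
          + (muQ h (fun y => u (s, y)) (⌊t / h⌋ - 1)
              - IbQ h (fun x => muQ h (fun y => u (x, y)) (⌊t / h⌋ - 1)) s)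
            * Nspl h 2 (⌊t / h⌋ - 1) t
          + (muQ h (fun y => u (s, y)) ⌊t / h⌋
              - IbQ h (fun x => muQ h (fun y => u (x, y)) ⌊t / h⌋) s)
            * Nspl h 2 ⌊t / h⌋ t) := by
    rw [key2 hh, key1 hh (fun y => u (s, y)) t]
    ring
  have hB := comboN (T2 (⌊t / h⌋ - 2)) (T2 (⌊t / h⌋ - 1)) (T2 ⌊t / h⌋) hN0 hN1 hN2 hNsum
  calc |u (s, t) - IbQ2 h u (s, t)|
      ≤ |u (s, t) - IbQ h (fun y => u (s, y)) t|
        + |(muQ h (fun y => u (s, y)) (⌊t / h⌋ - 2)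
              - IbQ h (fun x => muQ h (fun y => u (x, y)) (⌊t / h⌋ - 2)) s)
            * Nspl h 2 (⌊t / h⌋ - 2) t
          + (muQ h (fun y => u (s, y)) (⌊t / h⌋ - 1)
              - IbQ h (fun x => muQ h (fun y => u (x, y)) (⌊t / h⌋ - 1)) s)
            * Nspl h 2 (⌊t / h⌋ - 1) t
          + (muQ h (fun y => u (s, y)) ⌊t / h⌋
              - IbQ h (fun x => muQ h (fun y => u (x, y)) ⌊t / h⌋) s)
            * Nspl h 2 ⌊t / h⌋ t| := by
        rw [eq]; exact abs_add_le _ _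
    _ ≤ 24 * h ^ 3 * W + 36 * h ^ 3 * W := add_le_add T1 hB
    _ = 60 * h ^ 3 * W := by ring
end

section
/- Exactness of the modified quasi-interpolation on piecewise quadratics: if f̄_0 and f̄_1 are real polynomials of degree at most 2 with f̄_0(x*) = f̄_1(x*), then the modified quasi-interpolation reproduces f exactly away from the interface elements, i.e. (I_b^* f)(x) = f(x) for every x in every mesh element ω_i = [ih, (i+1)h] with i ∉ {κ − 1, κ}. -/
open scoped BigOperators Classical

/-- The modified quasi-interpolation `I_b^* f = Σ_j μ_j^* N_j`, where
`μ_j^* = μ_j(f̄₀)` if `supp N_j ⊆ (−∞, (κ+1)h]` (i.e. `j ≤ κ − 2`) and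
`μ_j^* = μ_j(f̄₁)` otherwise. -/
noncomputable def IbStar1 (h : ℝ) (κ : ℤ) (f0 f1 : ℝ → ℝ) (x : ℝ) : ℝ :=
  ∑' j : ℤ, (if j ≤ κ - 2 then muQ h f0 j else muQ h f1 j) * Nspl h 2 j x

lemma Nspl_zero_def (h : ℝ) (j : ℤ) (x : ℝ) :
    Nspl h 0 j x = if (j : ℝ) * h ≤ x ∧ x < ((j : ℝ) + 1) * h then 1 else 0 := rfl

lemma Nspl_one_def (h : ℝ) (j : ℤ) (x : ℝ) :
    Nspl h 1 j x = (x - (j : ℝ) * h) / h * Nspl h 0 j x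
      + ((((j : ℝ) + 2) * h - x) / h) * Nspl h 0 (j + 1) x := by
  show (x - (j : ℝ) * h) / ((((0:ℕ) : ℝ) + 1) * h) * Nspl h 0 j x
      + ((((j : ℝ) + ((0:ℕ) : ℝ) + 2) * h - x) / ((((0:ℕ) : ℝ) + 1) * h)) * Nspl h 0 (j + 1) x = _
  push_cast; ring_nf

lemma Nspl_two_def (h : ℝ) (j : ℤ) (x : ℝ) :
    Nspl h 2 j x = (x - (j : ℝ) * h) / (2 * h) * Nspl h 1 j x
      + ((((j : ℝ) + 3) * h - x) / (2 * h)) * Nspl h 1 (j + 1) x := by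
  show (x - (j : ℝ) * h) / ((((1:ℕ) : ℝ) + 1) * h) * Nspl h 1 j x
      + ((((j : ℝ) + ((1:ℕ) : ℝ) + 2) * h - x) / ((((1:ℕ) : ℝ) + 1) * h)) * Nspl h 1 (j + 1) x = _
  push_cast; ring_nf

lemma Nspl_zero_of_lt (h : ℝ) (hh : 0 < h) :
    ∀ (d : ℕ) (j : ℤ) (x : ℝ), x < (j : ℝ) * h → Nspl h d j x = 0
  | 0, j, x, hx => by
      rw [Nspl_zero_def, if_neg]; rintro ⟨h1, -⟩; linarith
  | d + 1, j, x, hx => by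
      have e1 := Nspl_zero_of_lt h hh d j x hx
      have e2 := Nspl_zero_of_lt h hh d (j + 1) x (by push_cast; nlinarith)
      simp only [Nspl, e1, e2, mul_zero, add_zero]

lemma Nspl_zero_of_ge (h : ℝ) (hh : 0 < h) :
    ∀ (d : ℕ) (j : ℤ) (x : ℝ), ((j : ℝ) + (d : ℕ) + 1) * h ≤ x → Nspl h d j x = 0
  | 0, j, x, hx => by
      rw [Nspl_zero_def, if_neg]; rintro ⟨-, h2⟩; push_cast at hx; nlinarith
  | d + 1, j, x, hx => by
      push_cast at hx
      have e1 := Nspl_zero_of_ge h hh d j x (by push_cast; nlinarith)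
      have e2 := Nspl_zero_of_ge h hh d (j + 1) x (by push_cast; nlinarith)
      simp only [Nspl, e1, e2, mul_zero, add_zero]

lemma Nspl_two_zero_of_le (h : ℝ) (hh : 0 < h) (j : ℤ) (x : ℝ) (hx : x ≤ (j : ℝ) * h) :
    Nspl h 2 j x = 0 := by
  rcases lt_or_eq_of_le hx with hlt | heq
  · exact Nspl_zero_of_lt h hh 2 j x hlt
  · rw [Nspl_two_def, Nspl_zero_of_lt h hh 1 (j + 1) x (by push_cast; nlinarith), heq]
    simp

lemma coreQ (h : ℝ) (hh : 0 < h) (p : Polynomial ℝ) (hp : p.degree ≤ 2)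
    (i : ℤ) (x : ℝ) (h1 : (i : ℝ) * h ≤ x) (h2 : x < ((i : ℝ) + 1) * h) :
    ∑ j ∈ Finset.Icc (i - 2) i, muQ h (fun y => p.eval y) j * Nspl h 2 j x = p.eval x := by
  have hne : h ≠ 0 := ne_of_gt hh
  have hdeg : p.natDegree < 3 := by
    have h2' : p.natDegree ≤ 2 := Polynomial.natDegree_le_iff_degree_le.mpr (by exact_mod_cast hp)
    omega
  have key : ∀ y : ℝ, p.eval y = p.coeff 0 + p.coeff 1 * y + p.coeff 2 * y ^ 2 := by
    intro y
    rw [Polynomial.eval_eq_sum_range' hdeg]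
    simp [Finset.sum_range_succ]
  have hN0i : Nspl h 0 i x = 1 := by rw [Nspl_zero_def, if_pos ⟨h1, h2⟩]
  have hN0 : ∀ k : ℤ, k ≠ i → Nspl h 0 k x = 0 := by
    intro k hk
    rw [Nspl_zero_def, if_neg]
    rintro ⟨hk1, hk2⟩
    rcases lt_or_gt_of_ne hk with hlt | hgt
    · have hc : (k : ℝ) + 1 ≤ i := by exact_mod_cast hlt
      nlinarith
    · have hc : (i : ℝ) + 1 ≤ k := by exact_mod_cast hgt
      nlinarith
  have hN1i : Nspl h 1 i x = (x - i * h) / h := by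
    rw [Nspl_one_def, hN0i, hN0 (i + 1) (by omega)]; ring
  have hN1im : Nspl h 1 (i - 1) x = (((i : ℝ) + 1) * h - x) / h := by
    rw [Nspl_one_def, hN0 (i - 1) (by omega), show i - 1 + 1 = i from by ring, hN0i]
    push_cast; ring
  have hN1z : ∀ k : ℤ, k ≠ i → k ≠ i - 1 → Nspl h 1 k x = 0 := by
    intro k hk hk'
    rw [Nspl_one_def, hN0 k hk, hN0 (k + 1) (by omega)]; ring
  have hN2i : Nspl h 2 i x = (x - i * h) / (2 * h) * ((x - i * h) / h) := by
    rw [Nspl_two_def, hN1i, hN1z (i + 1) (by omega) (by omega)]; ring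
  have hN2m1 : Nspl h 2 (i - 1) x
      = (x - ((i : ℝ) - 1) * h) / (2 * h) * ((((i : ℝ) + 1) * h - x) / h)
        + (((i : ℝ) + 2) * h - x) / (2 * h) * ((x - i * h) / h) := by
    rw [Nspl_two_def, hN1im, show i - 1 + 1 = i from by ring, hN1i]
    push_cast; ring
  have hN2m2 : Nspl h 2 (i - 2) x
      = ((((i : ℝ) + 1) * h - x) / (2 * h)) * ((((i : ℝ) + 1) * h - x) / h) := by
    rw [Nspl_two_def, hN1z (i - 2) (by omega) (by omega),
        show i - 2 + 1 = i - 1 from by ring, hN1im]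
    push_cast; ring
  have hset : Finset.Icc (i - 2) i = {i - 2, i - 1, i} := by
    ext j; simp [Finset.mem_Icc, Finset.mem_insert]; omega
  rw [hset, Finset.sum_insert (by simp only [Finset.mem_insert, Finset.mem_singleton]; omega), Finset.sum_insert (by simp only [Finset.mem_singleton]; omega),
      Finset.sum_singleton, hN2i, hN2m1, hN2m2]
  simp only [muQ, Fin.sum_univ_three, alphaC, Matrix.cons_val_zero, Matrix.cons_val_one,
    Matrix.head_cons, Matrix.cons_val_two, Matrix.tail_cons, Fin.val_zero, Fin.val_one,
    Fin.val_two, key]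
  push_cast
  field_simp
  ring

lemma sum4 (h : ℝ) (hh : 0 < h) (p : Polynomial ℝ) (hp : p.degree ≤ 2)
    (i : ℤ) (x : ℝ) (h1 : (i : ℝ) * h ≤ x) (h2 : x ≤ ((i : ℝ) + 1) * h)
    (c : ℤ → ℝ)
    (hc : ∀ j ∈ Finset.Icc (i - 2) (i + 1),
      c j = muQ h (fun y => p.eval y) j ∨ Nspl h 2 j x = 0) :
    ∑ j ∈ Finset.Icc (i - 2) (i + 1), c j * Nspl h 2 j x = p.eval x := by
  have hcong : ∑ j ∈ Finset.Icc (i - 2) (i + 1), c j * Nspl h 2 j x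
      = ∑ j ∈ Finset.Icc (i - 2) (i + 1), muQ h (fun y => p.eval y) j * Nspl h 2 j x := by
    refine Finset.sum_congr rfl fun j hj => ?_
    rcases hc j hj with hcj | hz
    · rw [hcj]
    · rw [hz]; ring
  rw [hcong]
  rcases lt_or_eq_of_le h2 with hlt | heq
  · have hsplit : Finset.Icc (i - 2) (i + 1) = insert (i + 1) (Finset.Icc (i - 2) i) := by
      ext j; simp only [Finset.mem_Icc, Finset.mem_insert]; omega
    rw [hsplit, Finset.sum_insert (by simp only [Finset.mem_Icc]; omega),
        Nspl_zero_of_lt h hh 2 (i + 1) x (by push_cast; linarith), mul_zero, zero_add]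
    exact coreQ h hh p hp i x h1 hlt
  · have hsplit : Finset.Icc (i - 2) (i + 1) = insert (i - 2) (Finset.Icc (i - 1) (i + 1)) := by
      ext j; simp only [Finset.mem_Icc, Finset.mem_insert]; omega
    rw [hsplit, Finset.sum_insert (by simp only [Finset.mem_Icc]; omega),
        Nspl_zero_of_ge h hh 2 (i - 2) x (by push_cast; nlinarith), mul_zero, zero_add]
    have hc := coreQ h hh p hp (i + 1) x (by push_cast; nlinarith) (by push_cast; nlinarith)
    rw [show (i + 1) - 2 = i - 1 from by ring] at hc
    exact hc

/-- exactness of the modified quasi-interpolation on piecewise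
quadratics: if `f̄₀, f̄₁` are polynomials of degree ≤ 2 with `f̄₀(x*) = f̄₁(x*)`, then
`I_b^* f = f` on every mesh element `[ih, (i+1)h]` with `i ∉ {κ−1, κ}`. -/
theorem stmt7 (h : ℝ) (hh : 0 < h) (κ : ℤ) (xstar : ℝ)
    (hx : xstar ∈ Set.Ioo ((κ : ℝ) * h) (((κ : ℝ) + 1) * h))
    (p0 p1 : Polynomial ℝ) (hp0 : p0.degree ≤ 2) (hp1 : p1.degree ≤ 2)
    (hmatch : p0.eval xstar = p1.eval xstar) :
    ∀ i : ℤ, i ≠ κ - 1 → i ≠ κ →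
      ∀ x ∈ Set.Icc ((i : ℝ) * h) (((i : ℝ) + 1) * h),
        IbStar1 h κ (fun y => p0.eval y) (fun y => p1.eval y) x
          = (if x ≤ xstar then p0.eval x else p1.eval x) := by
  intro i hi1 hi2 x hxm
  obtain ⟨hx1, hx2⟩ := hxm
  obtain ⟨hs1, hs2⟩ := hx
  rw [IbStar1, tsum_eq_sum (s := Finset.Icc (i - 2) (i + 1)) ?hout]
  case hout =>
    intro j hj
    simp only [Finset.mem_Icc, not_and_or, not_le] at hj
    rcases (show j ≤ i - 3 ∨ i + 2 ≤ j by omega) with hj' | hj'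
    · have hcast : (j : ℝ) + 3 ≤ i := by exact_mod_cast (by omega : j + 3 ≤ i)
      rw [Nspl_zero_of_ge h hh 2 j x (by push_cast; nlinarith), mul_zero]
    · have hcast : (i : ℝ) + 2 ≤ j := by exact_mod_cast hj'
      rw [Nspl_zero_of_lt h hh 2 j x (by nlinarith), mul_zero]
  rcases (show i ≤ κ - 2 ∨ κ + 1 ≤ i by omega) with hik | hik
  · have hik' : ((i : ℝ) + 1) ≤ κ := by exact_mod_cast (by omega : i + 1 ≤ κ)
    have hxs : x ≤ xstar := by nlinarith
    rw [if_pos hxs]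
    apply sum4 h hh p0 hp0 i x hx1 hx2
    intro j hj
    simp only [Finset.mem_Icc] at hj
    by_cases hjk : j ≤ κ - 2
    · left; rw [if_pos hjk]
    · right
      have hji : (i : ℝ) + 1 ≤ j := by exact_mod_cast (by omega : i + 1 ≤ j)
      exact Nspl_two_zero_of_le h hh j x (by nlinarith)
  · have hik' : ((κ : ℝ) + 1) ≤ i := by exact_mod_cast (by omega : κ + 1 ≤ i)
    have hxs : ¬ x ≤ xstar := by push_neg; nlinarith
    rw [if_neg hxs]
    apply sum4 h hh p1 hp1 i x hx1 hx2
    intro j hj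
    simp only [Finset.mem_Icc] at hj
    left
    rw [if_neg (by omega)]
end
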